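/- arXiv:2306.04013 — 7 statements merged into one kernel-verified Lean document; each statement's English description precedes it below -/
import Mathlib

section
/- A regular curve γ(t) = (u(t), v(t)) with u(t) > 0 is a critical point of the functional E[γ] = ∫ u^α √(u̇² + G² v̇²) dt (i.e., satisfies both Euler–Lagrange equations) if and only if its geodesic curvature satisfies κ = α G v̇ / (u √(u̇² + G² v̇²)). -/
open Real

noncomputable def pd1 (f : ℝ → ℝ → ℝ) (u v : ℝ) : ℝ := deriv (fun x => f x v) u

noncomputable def pd2 (f : ℝ → ℝ → ℝ) (u v : ℝ) : ℝ := deriv (fun y => f u y) v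

/-- The Lagrangian `L(x, y, dx, dy) = x^α √(dx² + G(x,y)² dy²)`. -/
noncomputable def Lag (α : ℝ) (G : ℝ → ℝ → ℝ) (x y dx dy : ℝ) : ℝ :=
  x ^ α * Real.sqrt (dx ^ 2 + (G x y) ^ 2 * dy ^ 2)

/-- The two Euler–Lagrange equations `∂L/∂u - d/dt (∂L/∂u̇) = 0` and
`∂L/∂v - d/dt (∂L/∂v̇) = 0` at time `t`, for the curve `t ↦ (u t, v t)`. -/
noncomputable def ELat (α : ℝ) (G : ℝ → ℝ → ℝ) (u v : ℝ → ℝ) (t : ℝ) : Prop :=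
  deriv (fun x => Lag α G x (v t) (deriv u t) (deriv v t)) (u t) -
      deriv (fun s => deriv (fun dx => Lag α G (u s) (v s) dx (deriv v s)) (deriv u s)) t = 0
  ∧ deriv (fun y => Lag α G (u t) y (deriv u t) (deriv v t)) (v t) -
      deriv (fun s => deriv (fun dy => Lag α G (u s) (v s) (deriv u s) dy) (deriv v s)) t = 0

/-- The signed geodesic curvature of the curve `t ↦ (u t, v t)` for the metric
`du² + G² dv²`. -/
noncomputable def kappa (G : ℝ → ℝ → ℝ) (u v : ℝ → ℝ) (t : ℝ) : ℝ :=
  -(deriv v t * (pd2 G (u t) (v t) * deriv u t * deriv v t +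
      2 * pd1 G (u t) (v t) * (deriv u t) ^ 2 +
      (G (u t) (v t)) ^ 2 * pd1 G (u t) (v t) * (deriv v t) ^ 2) +
    G (u t) (v t) * (deriv u t * deriv (deriv v) t - deriv (deriv u) t * deriv v t)) /
    ((deriv u t) ^ 2 + (G (u t) (v t)) ^ 2 * (deriv v t) ^ 2) ^ ((3 : ℝ) / 2)

open Real in
lemma pd_hasDerivAt1 (G : ℝ → ℝ → ℝ) (hG : ContDiff ℝ (⊤ : ℕ∞) (fun p : ℝ × ℝ => G p.1 p.2))
    (x y : ℝ) : HasDerivAt (fun x' => G x' y) (pd1 G x y) x := by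
  have hF := ((hG.differentiable (by simp)) (x, y)).hasFDerivAt
  have h := hF.comp_hasDerivAt x ((hasDerivAt_id x).prodMk (hasDerivAt_const x y))
  have h' : HasDerivAt (fun x' => G x' y) (fderiv ℝ (fun p : ℝ × ℝ => G p.1 p.2) (x, y) (1, 0)) x := h
  have : pd1 G x y = fderiv ℝ (fun p : ℝ × ℝ => G p.1 p.2) (x, y) (1, 0) := by simp only [pd1, pd2]; exact h'.deriv
  rw [this]; exact h

open Real in
lemma pd_hasDerivAt2 (G : ℝ → ℝ → ℝ) (hG : ContDiff ℝ (⊤ : ℕ∞) (fun p : ℝ × ℝ => G p.1 p.2))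
    (x y : ℝ) : HasDerivAt (fun y' => G x y') (pd2 G x y) y := by
  have hF := ((hG.differentiable (by simp)) (x, y)).hasFDerivAt
  have h := hF.comp_hasDerivAt y ((hasDerivAt_const y x).prodMk (hasDerivAt_id y))
  have h' : HasDerivAt (fun y' => G x y') (fderiv ℝ (fun p : ℝ × ℝ => G p.1 p.2) (x, y) (0, 1)) y := h
  have : pd2 G x y = fderiv ℝ (fun p : ℝ × ℝ => G p.1 p.2) (x, y) (0, 1) := by simp only [pd1, pd2]; exact h'.deriv
  rw [this]; exact h

open Real in
lemma Gcurve_hasDerivAt (G : ℝ → ℝ → ℝ) (hG : ContDiff ℝ (⊤ : ℕ∞) (fun p : ℝ × ℝ => G p.1 p.2))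
    (u v : ℝ → ℝ) (hu : Differentiable ℝ u) (hv : Differentiable ℝ v) (t : ℝ) :
    HasDerivAt (fun s => G (u s) (v s))
      (pd1 G (u t) (v t) * deriv u t + pd2 G (u t) (v t) * deriv v t) t := by
  have hF := ((hG.differentiable (by simp)) (u t, v t)).hasFDerivAt
  have hc : HasDerivAt (fun s => (u s, v s)) (deriv u t, deriv v t) t :=
    ((hu t).hasDerivAt).prodMk ((hv t).hasDerivAt)
  have h := hF.comp_hasDerivAt t hc
  have h1 := hF.comp_hasDerivAt (u t) ((hasDerivAt_id (u t)).prodMk (hasDerivAt_const (u t) (v t)))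
  have h2 := hF.comp_hasDerivAt (v t) ((hasDerivAt_const (v t) (u t)).prodMk (hasDerivAt_id (v t)))
  have e1 : pd1 G (u t) (v t) = fderiv ℝ (fun p : ℝ × ℝ => G p.1 p.2) (u t, v t) (1, 0) :=
    (pd_hasDerivAt1 G hG (u t) (v t)).unique h1
  have e2 : pd2 G (u t) (v t) = fderiv ℝ (fun p : ℝ × ℝ => G p.1 p.2) (u t, v t) (0, 1) :=
    (pd_hasDerivAt2 G hG (u t) (v t)).unique h2
  have key : fderiv ℝ (fun p : ℝ × ℝ => G p.1 p.2) (u t, v t) (deriv u t, deriv v t) =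
      pd1 G (u t) (v t) * deriv u t + pd2 G (u t) (v t) * deriv v t := by
    have : (deriv u t, deriv v t) =
        deriv u t • ((1 : ℝ), (0 : ℝ)) + deriv v t • ((0 : ℝ), (1 : ℝ)) := by
      simp [Prod.ext_iff]
    rw [this, map_add, map_smul, map_smul, e1, e2]
    simp [mul_comm]
  rw [← key]; exact h

open Real in
lemma sqrtQ_pos {a : ℝ} (h : 0 < a) : 0 < Real.sqrt a := Real.sqrt_pos.mpr h

open Real in
lemma dLag_dx (α : ℝ) (G : ℝ → ℝ → ℝ) (x y dx dy : ℝ)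
    (hQ : 0 < dx ^ 2 + (G x y) ^ 2 * dy ^ 2) :
    deriv (fun d => Lag α G x y d dy) dx
      = x ^ α * dx / Real.sqrt (dx ^ 2 + (G x y) ^ 2 * dy ^ 2) := by
  have hq : HasDerivAt (fun d : ℝ => d ^ 2 + (G x y) ^ 2 * dy ^ 2) (2 * dx) dx := by
    simpa using (hasDerivAt_pow 2 dx).add_const ((G x y) ^ 2 * dy ^ 2)
  have hs := (Real.hasDerivAt_sqrt hQ.ne').comp dx hq
  have H : HasDerivAt (fun d => Lag α G x y d dy)
      (x ^ α * (1 / (2 * Real.sqrt (dx ^ 2 + (G x y) ^ 2 * dy ^ 2)) * (2 * dx))) dx :=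
    hs.const_mul (x ^ α)
  rw [H.deriv]
  have hSne : Real.sqrt (dx ^ 2 + (G x y) ^ 2 * dy ^ 2) ≠ 0 := (sqrtQ_pos hQ).ne'
  field_simp

open Real in
lemma dLag_dy (α : ℝ) (G : ℝ → ℝ → ℝ) (x y dx dy : ℝ)
    (hQ : 0 < dx ^ 2 + (G x y) ^ 2 * dy ^ 2) :
    deriv (fun d => Lag α G x y dx d) dy
      = x ^ α * (G x y) ^ 2 * dy / Real.sqrt (dx ^ 2 + (G x y) ^ 2 * dy ^ 2) := by
  have hq : HasDerivAt (fun d : ℝ => dx ^ 2 + (G x y) ^ 2 * d ^ 2)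
      (2 * (G x y) ^ 2 * dy) dy := by
    have := ((hasDerivAt_pow 2 dy).const_mul ((G x y) ^ 2)).const_add (dx ^ 2)
    refine this.congr_deriv ?_
    ring
  have hs := (Real.hasDerivAt_sqrt hQ.ne').comp dy hq
  have hSne : Real.sqrt (dx ^ 2 + (G x y) ^ 2 * dy ^ 2) ≠ 0 := (sqrtQ_pos hQ).ne'
  have H : HasDerivAt (fun d => Lag α G x y dx d)
      (x ^ α * (G x y) ^ 2 * dy / Real.sqrt (dx ^ 2 + (G x y) ^ 2 * dy ^ 2)) dy := by
    have := hs.const_mul (x ^ α)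
    refine this.congr_deriv ?_
    field_simp
  exact H.deriv

open Real in
lemma dLag_x (α : ℝ) (G : ℝ → ℝ → ℝ) (hG : ContDiff ℝ (⊤ : ℕ∞) (fun p : ℝ × ℝ => G p.1 p.2))
    (x y dx dy : ℝ) (hx : 0 < x) (hQ : 0 < dx ^ 2 + (G x y) ^ 2 * dy ^ 2) :
    deriv (fun x' => Lag α G x' y dx dy) x
      = α * x ^ (α - 1) * Real.sqrt (dx ^ 2 + (G x y) ^ 2 * dy ^ 2)
        + x ^ α * (G x y * pd1 G x y * dy ^ 2 / Real.sqrt (dx ^ 2 + (G x y) ^ 2 * dy ^ 2)) := by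
  have h1 : HasDerivAt (fun x' : ℝ => x' ^ α) (α * x ^ (α - 1)) x := by
    simpa using (hasDerivAt_id x).rpow_const (Or.inl hx.ne')
  have hq : HasDerivAt (fun x' => dx ^ 2 + (G x' y) ^ 2 * dy ^ 2)
      (2 * G x y * pd1 G x y * dy ^ 2) x := by
    have := (((pd_hasDerivAt1 G hG x y).pow 2).mul_const (dy ^ 2)).const_add (dx ^ 2)
    refine this.congr_deriv ?_
    ring
  have hs := (Real.hasDerivAt_sqrt hQ.ne').comp x hq
  have hSne : Real.sqrt (dx ^ 2 + (G x y) ^ 2 * dy ^ 2) ≠ 0 := (sqrtQ_pos hQ).ne'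
  have H : HasDerivAt (fun x' => Lag α G x' y dx dy)
      (α * x ^ (α - 1) * Real.sqrt (dx ^ 2 + (G x y) ^ 2 * dy ^ 2)
        + x ^ α * (G x y * pd1 G x y * dy ^ 2 / Real.sqrt (dx ^ 2 + (G x y) ^ 2 * dy ^ 2))) x := by
    have := h1.mul hs
    refine this.congr_deriv ?_
    simp only [Function.comp_apply]
    field_simp
  exact H.deriv

open Real in
lemma dLag_y (α : ℝ) (G : ℝ → ℝ → ℝ) (hG : ContDiff ℝ (⊤ : ℕ∞) (fun p : ℝ × ℝ => G p.1 p.2))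
    (x y dx dy : ℝ) (hQ : 0 < dx ^ 2 + (G x y) ^ 2 * dy ^ 2) :
    deriv (fun y' => Lag α G x y' dx dy) y
      = x ^ α * (G x y * pd2 G x y * dy ^ 2 / Real.sqrt (dx ^ 2 + (G x y) ^ 2 * dy ^ 2)) := by
  have hq : HasDerivAt (fun y' => dx ^ 2 + (G x y') ^ 2 * dy ^ 2)
      (2 * G x y * pd2 G x y * dy ^ 2) y := by
    have := (((pd_hasDerivAt2 G hG x y).pow 2).mul_const (dy ^ 2)).const_add (dx ^ 2)
    refine this.congr_deriv ?_
    ring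
  have hs := (Real.hasDerivAt_sqrt hQ.ne').comp y hq
  have hSne : Real.sqrt (dx ^ 2 + (G x y) ^ 2 * dy ^ 2) ≠ 0 := (sqrtQ_pos hQ).ne'
  have H : HasDerivAt (fun y' => Lag α G x y' dx dy)
      (x ^ α * (G x y * pd2 G x y * dy ^ 2 / Real.sqrt (dx ^ 2 + (G x y) ^ 2 * dy ^ 2))) y := by
    have := hs.const_mul (x ^ α)
    refine this.congr_deriv ?_
    field_simp
  exact H.deriv

lemma algMain (α w U S g g1 g2 dU dV ddU ddV : ℝ) (hU : U ≠ 0) (hS : S ≠ 0) (hw : w ≠ 0)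
    (hg : g ≠ 0) (hreg : ¬(dU = 0 ∧ dV = 0)) (hS2 : S ^ 2 = dU ^ 2 + g ^ 2 * dV ^ 2) :
    (α * (w / U) * S + w * (g * g1 * dV ^ 2 / S) -
          ((dU * α * (w / U) * dU + w * ddU) * S -
              w * dU *
                (1 / (2 * S) * (2 * dU * ddU + 2 * g * (g1 * dU + g2 * dV) * dV ^ 2 + 2 * g ^ 2 * dV * ddV))) /
            S ^ 2 =
        0 ∧
      w * (g * g2 * dV ^ 2 / S) -
          (((dU * α * (w / U) * g ^ 2 + w * ((2 : ℕ) * g ^ 1 * (g1 * dU + g2 * dV))) * dV + w * g ^ 2 * ddV) *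
                S -
              w * g ^ 2 * dV *
                (1 / (2 * S) * (2 * dU * ddU + 2 * g * (g1 * dU + g2 * dV) * dV ^ 2 + 2 * g ^ 2 * dV * ddV))) /
            S ^ 2 =
        0 ↔
    -(dV * (g2 * dU * dV + 2 * g1 * dU ^ 2 + g ^ 2 * g1 * dV ^ 2) + g * (dU * ddV - ddU * dV)) / S ^ 3 =
      α * g * dV / (U * S)) := by
  set K : ℝ := -(dV * (g2 * dU * dV + 2 * g1 * dU ^ 2 + g ^ 2 * g1 * dV ^ 2) + g * (dU * ddV - ddU * dV)) / S ^ 3 -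
      α * g * dV / (U * S) with hK
  have h1 : α * (w / U) * S + w * (g * g1 * dV ^ 2 / S) -
          ((dU * α * (w / U) * dU + w * ddU) * S -
              w * dU *
                (1 / (2 * S) * (2 * dU * ddU + 2 * g * (g1 * dU + g2 * dV) * dV ^ 2 + 2 * g ^ 2 * dV * ddV))) /
            S ^ 2 = -(w * g * dV) * K := by
    rw [hK]
    field_simp
    ring_nf
    rw [show S ^ 4 = (S ^ 2) ^ 2 by ring, hS2]
    ring
  have h2 : w * (g * g2 * dV ^ 2 / S) -
          (((dU * α * (w / U) * g ^ 2 + w * ((2 : ℕ) * g ^ 1 * (g1 * dU + g2 * dV))) * dV + w * g ^ 2 * ddV) *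
                S -
              w * g ^ 2 * dV *
                (1 / (2 * S) * (2 * dU * ddU + 2 * g * (g1 * dU + g2 * dV) * dV ^ 2 + 2 * g ^ 2 * dV * ddV))) /
            S ^ 2 = (w * g * dU) * K := by
    rw [hK]
    field_simp
    ring_nf
    rw [hS2]
    ring
  rw [h1, h2]
  constructor
  · rintro ⟨e1, e2⟩
    have hKz : K = 0 := by
      by_contra hKz
      have hdV : dV = 0 := by
        rcases mul_eq_zero.mp e1 with h | h
        · rcases mul_eq_zero.mp (neg_eq_zero.mp h) with h' | h'
          · rcases mul_eq_zero.mp h' with h'' | h''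
            · exact absurd h'' hw
            · exact absurd h'' hg
          · exact h'
        · exact absurd h hKz
      have hdU : dU = 0 := by
        rcases mul_eq_zero.mp e2 with h | h
        · rcases mul_eq_zero.mp h with h' | h'
          · rcases mul_eq_zero.mp h' with h'' | h''
            · exact absurd h'' hw
            · exact absurd h'' hg
          · exact h'
        · exact absurd h hKz
      exact hreg ⟨hdU, hdV⟩
    rw [hK] at hKz
    exact sub_eq_zero.mp hKz
  · intro h
    have hKz : K = 0 := by rw [hK, h]; ring
    rw [hKz]; constructor <;> ring

open Real in
lemma ELat_iff (α : ℝ) (G : ℝ → ℝ → ℝ)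
    (hG : ContDiff ℝ (⊤ : ℕ∞) (fun p : ℝ × ℝ => G p.1 p.2)) (hGpos : ∀ x y, 0 < G x y)
    (u v : ℝ → ℝ) (hu : ContDiff ℝ 2 u) (hv : ContDiff ℝ 2 v)
    (hupos : ∀ t, 0 < u t) (hreg : ∀ t, (deriv u t, deriv v t) ≠ (0, 0)) (t : ℝ) :
    ELat α G u v t ↔
      kappa G u v t =
        α * G (u t) (v t) * deriv v t /
          (u t * Real.sqrt ((deriv u t) ^ 2 + (G (u t) (v t)) ^ 2 * (deriv v t) ^ 2)) := by
  -- differentiability facts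
  have hu1 : Differentiable ℝ u := hu.differentiable (by norm_num)
  have hv1 : Differentiable ℝ v := hv.differentiable (by norm_num)
  have hud1 : Differentiable ℝ (deriv u) := by
    have h := (contDiff_succ_iff_deriv).mp
      (show ContDiff ℝ (1 + 1) u from (by norm_num : ((2 : WithTop ℕ∞)) = 1 + 1) ▸ hu)
    exact h.2.2.differentiable (by norm_num)
  have hvd1 : Differentiable ℝ (deriv v) := by
    have h := (contDiff_succ_iff_deriv).mp
      (show ContDiff ℝ (1 + 1) v from (by norm_num : ((2 : WithTop ℕ∞)) = 1 + 1) ▸ hv)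
    exact h.2.2.differentiable (by norm_num)
  have hQ : ∀ s, 0 < (deriv u s) ^ 2 + (G (u s) (v s)) ^ 2 * (deriv v s) ^ 2 := by
    intro s
    by_cases h : deriv u s = 0
    · have h2 : deriv v s ≠ 0 := by
        intro h2; exact hreg s (by rw [h, h2])
      have := hGpos (u s) (v s)
      positivity
    · positivity
  -- pointwise deriv facts
  have hdu : HasDerivAt (deriv u) (deriv (deriv u) t) t := (hud1 t).hasDerivAt
  have hdv : HasDerivAt (deriv v) (deriv (deriv v) t) t := (hvd1 t).hasDerivAt
  have hGc := Gcurve_hasDerivAt G hG u v hu1 hv1 t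
  have hQt : HasDerivAt
      (fun s => (deriv u s) ^ 2 + (G (u s) (v s)) ^ 2 * (deriv v s) ^ 2)
      (2 * deriv u t * deriv (deriv u) t
        + 2 * G (u t) (v t) * (pd1 G (u t) (v t) * deriv u t + pd2 G (u t) (v t) * deriv v t)
            * (deriv v t) ^ 2
        + 2 * (G (u t) (v t)) ^ 2 * deriv v t * deriv (deriv v) t) t := by
    have := (hdu.pow 2).add ((hGc.pow 2).mul (hdv.pow 2))
    refine this.congr_deriv ?_
    simp only [Pi.pow_apply]
    ring
  have hSt : HasDerivAt
      (fun s => Real.sqrt ((deriv u s) ^ 2 + (G (u s) (v s)) ^ 2 * (deriv v s) ^ 2))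
      (1 / (2 * Real.sqrt ((deriv u t) ^ 2 + (G (u t) (v t)) ^ 2 * (deriv v t) ^ 2)) *
        (2 * deriv u t * deriv (deriv u) t
        + 2 * G (u t) (v t) * (pd1 G (u t) (v t) * deriv u t + pd2 G (u t) (v t) * deriv v t)
            * (deriv v t) ^ 2
        + 2 * (G (u t) (v t)) ^ 2 * deriv v t * deriv (deriv v) t)) t :=
    (Real.hasDerivAt_sqrt (hQ t).ne').comp t hQt
  have hSne : Real.sqrt ((deriv u t) ^ 2 + (G (u t) (v t)) ^ 2 * (deriv v t) ^ 2) ≠ 0 :=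
    (sqrtQ_pos (hQ t)).ne'
  have hrpow : HasDerivAt (fun s => (u s) ^ α) (deriv u t * α * (u t) ^ (α - 1)) t :=
    (hu1 t).hasDerivAt.rpow_const (Or.inl (hupos t).ne')
  -- time derivative of ∂L/∂dx along the curve
  have hfunA : (fun s => deriv (fun dx => Lag α G (u s) (v s) dx (deriv v s)) (deriv u s))
      = fun s => (u s) ^ α * deriv u s /
          Real.sqrt ((deriv u s) ^ 2 + (G (u s) (v s)) ^ 2 * (deriv v s) ^ 2) :=
    funext fun s => dLag_dx α G (u s) (v s) (deriv u s) (deriv v s) (hQ s)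
  have hA : HasDerivAt (fun s => (u s) ^ α * deriv u s /
      Real.sqrt ((deriv u s) ^ 2 + (G (u s) (v s)) ^ 2 * (deriv v s) ^ 2))
      (((deriv u t * α * (u t) ^ (α - 1) * deriv u t + (u t) ^ α * deriv (deriv u) t) *
          Real.sqrt ((deriv u t) ^ 2 + (G (u t) (v t)) ^ 2 * (deriv v t) ^ 2)
        - (u t) ^ α * deriv u t *
          (1 / (2 * Real.sqrt ((deriv u t) ^ 2 + (G (u t) (v t)) ^ 2 * (deriv v t) ^ 2)) *
          (2 * deriv u t * deriv (deriv u) t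
          + 2 * G (u t) (v t) * (pd1 G (u t) (v t) * deriv u t + pd2 G (u t) (v t) * deriv v t)
              * (deriv v t) ^ 2
          + 2 * (G (u t) (v t)) ^ 2 * deriv v t * deriv (deriv v) t))) /
        (Real.sqrt ((deriv u t) ^ 2 + (G (u t) (v t)) ^ 2 * (deriv v t) ^ 2)) ^ 2) t :=
    (hrpow.mul hdu).div hSt hSne
  -- time derivative of ∂L/∂dy along the curve
  have hfunB : (fun s => deriv (fun dy => Lag α G (u s) (v s) (deriv u s) dy) (deriv v s))
      = fun s => (u s) ^ α * (G (u s) (v s)) ^ 2 * deriv v s /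
          Real.sqrt ((deriv u s) ^ 2 + (G (u s) (v s)) ^ 2 * (deriv v s) ^ 2) :=
    funext fun s => dLag_dy α G (u s) (v s) (deriv u s) (deriv v s) (hQ s)
  have hNb : HasDerivAt (fun s => (u s) ^ α * (G (u s) (v s)) ^ 2 * deriv v s)
      ((deriv u t * α * (u t) ^ (α - 1) * (G (u t) (v t)) ^ 2
        + (u t) ^ α * ((2 : ℕ) * (G (u t) (v t)) ^ 1 *
            (pd1 G (u t) (v t) * deriv u t + pd2 G (u t) (v t) * deriv v t))) * deriv v t
        + (u t) ^ α * (G (u t) (v t)) ^ 2 * deriv (deriv v) t) t :=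
    (hrpow.mul (hGc.pow 2)).mul hdv
  have hB : HasDerivAt (fun s => (u s) ^ α * (G (u s) (v s)) ^ 2 * deriv v s /
      Real.sqrt ((deriv u s) ^ 2 + (G (u s) (v s)) ^ 2 * (deriv v s) ^ 2))
      ((((deriv u t * α * (u t) ^ (α - 1) * (G (u t) (v t)) ^ 2
        + (u t) ^ α * ((2 : ℕ) * (G (u t) (v t)) ^ 1 *
            (pd1 G (u t) (v t) * deriv u t + pd2 G (u t) (v t) * deriv v t))) * deriv v t
        + (u t) ^ α * (G (u t) (v t)) ^ 2 * deriv (deriv v) t) *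
          Real.sqrt ((deriv u t) ^ 2 + (G (u t) (v t)) ^ 2 * (deriv v t) ^ 2)
        - (u t) ^ α * (G (u t) (v t)) ^ 2 * deriv v t *
          (1 / (2 * Real.sqrt ((deriv u t) ^ 2 + (G (u t) (v t)) ^ 2 * (deriv v t) ^ 2)) *
          (2 * deriv u t * deriv (deriv u) t
          + 2 * G (u t) (v t) * (pd1 G (u t) (v t) * deriv u t + pd2 G (u t) (v t) * deriv v t)
              * (deriv v t) ^ 2
          + 2 * (G (u t) (v t)) ^ 2 * deriv v t * deriv (deriv v) t))) /
        (Real.sqrt ((deriv u t) ^ 2 + (G (u t) (v t)) ^ 2 * (deriv v t) ^ 2)) ^ 2) t :=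
    hNb.div hSt hSne
  -- now rewrite everything
  unfold ELat
  rw [hfunA, hfunB, hA.deriv, hB.deriv,
    dLag_x α G hG (u t) (v t) (deriv u t) (deriv v t) (hupos t) (hQ t),
    dLag_y α G hG (u t) (v t) (deriv u t) (deriv v t) (hQ t)]
  unfold kappa
  set U := u t with hUdef
  set V := v t with hVdef
  set g := G U V with hgdef
  set g1 := pd1 G U V with hg1def
  set g2 := pd2 G U V with hg2def
  set dU := deriv u t with hdUdef
  set dV := deriv v t with hdVdef
  set ddU := deriv (deriv u) t with hddUdef
  set ddV := deriv (deriv v) t with hddVdef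
  set S := Real.sqrt (dU ^ 2 + g ^ 2 * dV ^ 2) with hSdef
  have hS2 : S ^ 2 = dU ^ 2 + g ^ 2 * dV ^ 2 := Real.sq_sqrt (hQ t).le
  have hQ32 : (dU ^ 2 + g ^ 2 * dV ^ 2) ^ ((3 : ℝ) / 2) = S ^ 3 := by
    rw [hSdef, show ((3 : ℝ) / 2) = (1 / 2) * ((3 : ℕ) : ℝ) by norm_num,
      Real.rpow_mul (by positivity), Real.rpow_natCast, ← Real.sqrt_eq_rpow]
  rw [hQ32, Real.rpow_sub_one (hupos t).ne']
  exact algMain α (U ^ α) U S g g1 g2 dU dV ddU ddV (hupos t).ne' hSne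
    (Real.rpow_pos_of_pos (hupos t) α).ne' (hGpos U V).ne'
    (fun h => hreg t (by rw [← hdUdef, ← hdVdef, h.1, h.2]))
    (Real.sq_sqrt (hQ t).le)

/-- A regular curve with `u > 0` satisfies both Euler–Lagrange equations of
`E[γ] = ∫ u^α √(u̇² + G² v̇²) dt` iff its geodesic curvature satisfies
`κ = α G v̇ / (u √(u̇² + G² v̇²))`. -/
theorem stmt2 (α : ℝ) (G : ℝ → ℝ → ℝ)
    (hG : ContDiff ℝ (⊤ : ℕ∞) (fun p : ℝ × ℝ => G p.1 p.2)) (hGpos : ∀ x y, 0 < G x y)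
    (u v : ℝ → ℝ) (hu : ContDiff ℝ 2 u) (hv : ContDiff ℝ 2 v)
    (hupos : ∀ t, 0 < u t) (hreg : ∀ t, (deriv u t, deriv v t) ≠ (0, 0)) :
    (∀ t, ELat α G u v t) ↔
      ∀ t, kappa G u v t =
        α * G (u t) (v t) * deriv v t /
          (u t * Real.sqrt ((deriv u t) ^ 2 + (G (u t) (v t)) ^ 2 * (deriv v t) ^ 2)) := by
  exact forall_congr' fun t => ELat_iff α G hG hGpos u v hu hv hupos hreg t
end

section
/- In the half-plane u > 0 with metric du² + G(u,v)² dv², the coordinate curve v ↦ (u₀, v) is an α-catenary if and only if α G(u₀, v) + u₀ G_u(u₀, v) = 0 holds for all v. -/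
open Real

/-- In the half-plane `u > 0` with metric `du² + G² dv²`, the coordinate curve
`v ↦ (u₀, v)` is an α-catenary iff `α G(u₀,v) + u₀ G_u(u₀,v) = 0` for all `v`. -/
theorem stmt4 (α u₀ : ℝ) (hu₀ : 0 < u₀) (G : ℝ → ℝ → ℝ)
    (hG : ContDiff ℝ (⊤ : ℕ∞) (fun p : ℝ × ℝ => G p.1 p.2)) (hGpos : ∀ x y, 0 < G x y) :
    (∀ v : ℝ, ELat α G (fun _ => u₀) (fun s => s) v) ↔
      ∀ v : ℝ, α * G u₀ v + u₀ * pd1 G u₀ v = 0 := by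
  have hGd : Differentiable ℝ (fun p : ℝ × ℝ => G p.1 p.2) := hG.differentiable (by simp)
  have hG1 : ∀ y, Differentiable ℝ (fun x => G x y) := fun y =>
    hGd.comp (differentiable_id.prodMk (differentiable_const y))
  -- the Lagrangian along constant-speed data, as a function of x
  have hLagx : ∀ t : ℝ, (fun x => Lag α G x t (0:ℝ) 1) = fun x => x ^ α * G x t := by
    intro t; funext x
    simp [Lag, Real.sqrt_sq (hGpos x t).le]
  -- inner dx-derivative vanishes
  have hinner1 : ∀ s : ℝ, deriv (fun dx => Lag α G u₀ s dx (1:ℝ)) 0 = 0 := by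
    intro s
    have hne : (0:ℝ)^2 + (G u₀ s)^2 * (1:ℝ)^2 ≠ 0 := by
      have := hGpos u₀ s; positivity
    have hne' : (0:ℝ)^2 + (G u₀ s)^2 ≠ 0 := by
      have := hGpos u₀ s; positivity
    have h1 := (hasDerivAt_pow 2 (0:ℝ)).add_const ((G u₀ s)^2)
    have h2 := ((Real.hasDerivAt_sqrt hne').comp 0 h1).const_mul (u₀ ^ α)
    have h3 : HasDerivAt (fun dx => Lag α G u₀ s dx (1:ℝ)) 0 0 := by
      simpa [Lag] using h2
    exact h3.deriv
  -- inner dy-derivative equals u₀^α * G u₀ s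
  have hinner2 : ∀ s : ℝ, deriv (fun dy => Lag α G u₀ s (0:ℝ) dy) 1 = u₀ ^ α * G u₀ s := by
    intro s
    have hc := hGpos u₀ s
    have hne : (0:ℝ)^2 + (G u₀ s)^2 * (1:ℝ)^2 ≠ 0 := by positivity
    have hne' : (G u₀ s)^2 * (1:ℝ)^2 ≠ 0 := by positivity
    have h1 := (hasDerivAt_pow 2 (1:ℝ)).const_mul ((G u₀ s)^2)
    have h2 := ((Real.hasDerivAt_sqrt hne').comp 1 h1).const_mul (u₀ ^ α)
    have hval : u₀ ^ α * (1 / (2 * Real.sqrt ((G u₀ s)^2 * (1:ℝ)^2)) * ((G u₀ s)^2 * (↑2 * (1:ℝ)^1)))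
        = u₀ ^ α * G u₀ s := by
      rw [one_pow, mul_one, pow_one, mul_one, Real.sqrt_sq hc.le]
      field_simp
    have h3 : HasDerivAt (fun dy => Lag α G u₀ s (0:ℝ) dy) (u₀ ^ α * G u₀ s) 1 := by
      rw [← hval]
      have hf : (fun dy => Lag α G u₀ s (0:ℝ) dy)
          = fun dy => u₀ ^ α * Real.sqrt ((G u₀ s)^2 * dy^2) := by
        funext dy; simp [Lag]
      rw [hf]; exact h2
    exact h3.deriv
  -- x-derivative of the Lagrangian
  have key1 : ∀ t : ℝ, deriv (fun x => Lag α G x t (0:ℝ) 1) u₀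
      = u₀ ^ (α - 1) * (α * G u₀ t + u₀ * pd1 G u₀ t) := by
    intro t
    have hx : HasDerivAt (fun x : ℝ => x ^ α) (α * u₀ ^ (α - 1)) u₀ :=
      Real.hasDerivAt_rpow_const (Or.inl hu₀.ne')
    have hg : HasDerivAt (fun x => G x t) (pd1 G u₀ t) u₀ := by
      simpa [pd1] using ((hG1 t) u₀).hasDerivAt
    have h : HasDerivAt (fun x => x ^ α * G x t) _ u₀ := hx.mul hg
    rw [hLagx t, h.deriv]
    have hpow : u₀ ^ α = u₀ ^ (α - 1) * u₀ := by
      rw [← Real.rpow_add_one hu₀.ne']; norm_num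
    rw [hpow]; ring
  have hupos : (0:ℝ) < u₀ ^ (α - 1) := Real.rpow_pos_of_pos hu₀ _
  have hEL : ∀ t : ℝ, ELat α G (fun _ => u₀) (fun s => s) t ↔
      u₀ ^ (α - 1) * (α * G u₀ t + u₀ * pd1 G u₀ t) = 0 := by
    intro t
    unfold ELat
    simp only [deriv_const, deriv_id'']
    have hB : (fun s : ℝ => deriv (fun dx => Lag α G u₀ s dx (1:ℝ)) 0) = fun _ => (0:ℝ) :=
      funext hinner1
    have hD : (fun s : ℝ => deriv (fun dy => Lag α G u₀ s (0:ℝ) dy) 1)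
        = fun y => Lag α G u₀ y (0:ℝ) 1 := by
      funext s
      rw [hinner2 s]
      simp [Lag, Real.sqrt_sq (hGpos u₀ s).le]
    rw [hB, hD, key1 t, deriv_const]
    simp
  rw [forall_congr' hEL]
  constructor
  · intro h v
    have := h v
    rcases mul_eq_zero.mp this with h' | h'
    · exact absurd h' hupos.ne'
    · exact h'
  · intro h v
    rw [h v, mul_zero]
end

section
/- If u : I → (0,∞) is a solution of the planar α-catenary equation α/u = ü/(1+u̇²) on an interval I, then there exists a constant μ > 0 such that 1 + u̇(t)² = μ·u(t)^{2α} for all t ∈ I. -/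
open Real Set

/-! Multiplying the equation by `2 u̇ / (1 + u̇²)` gives `(log (1 + u̇²))˙ = 2α (log u)˙`, so
`(1 + u̇²) u^{-2α}` has derivative zero on the interval, hence is a constant, positive since
`u > 0`. -/

theorem hasDerivAt_catenary_first_integral {α t w : ℝ} {u v : ℝ → ℝ}
    (hu : HasDerivAt u (v t) t) (hv : HasDerivAt v w t) (hpos : 0 < u t)
    (heq : α / u t * (1 + v t ^ 2) = w) :
    HasDerivAt (fun s ↦ (1 + v s ^ 2) * u s ^ (-(2 * α))) 0 t := by
  have hE : HasDerivAt (fun s ↦ 1 + v s ^ 2) (2 * v t * w) t := by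
    simpa [mul_comm] using (hv.pow 2).const_add 1
  have hP : HasDerivAt (fun s ↦ u s ^ (-(2 * α))) (v t * (-(2 * α)) * u t ^ (-(2 * α) - 1)) t :=
    hu.rpow_const (Or.inl hpos.ne')
  refine (hE.mul hP).congr_deriv ?_
  rw [← heq, rpow_sub_one hpos.ne']
  field_simp
  ring

theorem ContDiffOn.hasDerivAt_and_hasDerivAt_deriv_of_isOpen {u : ℝ → ℝ} {s : Set ℝ} {t : ℝ}
    (hu : ContDiffOn ℝ 2 u s) (hs : IsOpen s) (ht : t ∈ s) :
    HasDerivAt u (deriv u t) t ∧ HasDerivAt (deriv u) (deriv (deriv u) t) t :=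
  ⟨((hu.differentiableOn (by norm_num)).differentiableAt (hs.mem_nhds ht)).hasDerivAt,
    (((hu.deriv_of_isOpen hs (by norm_num : (1 : WithTop ℕ∞) + 1 ≤ 2)).differentiableOn
      one_ne_zero).differentiableAt (hs.mem_nhds ht)).hasDerivAt⟩

/-- If `u : I → (0,∞)` is a C² solution of the planar α-catenary equation
`α/u (1 + u̇²) = ü` on an open interval `I`, then there is a constant `μ > 0` with
`1 + u̇² = μ u^{2α}` on `I`. -/
theorem stmt6 (α a b : ℝ) (u : ℝ → ℝ)
    (hu : ContDiffOn ℝ 2 u (Ioo a b))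
    (hpos : ∀ t ∈ Ioo a b, 0 < u t)
    (heq : ∀ t ∈ Ioo a b,
      α / u t * (1 + (deriv u t) ^ 2) = deriv (deriv u) t) :
    ∃ μ : ℝ, 0 < μ ∧ ∀ t ∈ Ioo a b, 1 + (deriv u t) ^ 2 = μ * u t ^ (2 * α) := by
  have hI : ∀ t ∈ Ioo a b,
      HasDerivAt (fun s ↦ (1 + deriv u s ^ 2) * u s ^ (-(2 * α))) 0 t := fun t ht ↦
    have hd := hu.hasDerivAt_and_hasDerivAt_deriv_of_isOpen isOpen_Ioo ht
    hasDerivAt_catenary_first_integral hd.1 hd.2 (hpos t ht) (heq t ht)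
  obtain ⟨μ, hμ⟩ := isOpen_Ioo.exists_is_const_of_deriv_eq_zero isPreconnected_Ioo
    (fun t ht ↦ (hI t ht).differentiableAt.differentiableWithinAt) (fun t ht ↦ (hI t ht).deriv)
  rcases (Ioo a b).eq_empty_or_nonempty with he | ⟨t₀, ht₀⟩
  · exact ⟨1, one_pos, by simp [he]⟩
  have hu₀ := hpos t₀ ht₀
  refine ⟨μ, hμ t₀ ht₀ ▸ by positivity, fun t ht ↦ ?_⟩
  have hut := hpos t ht
  rw [← hμ t ht, rpow_neg hut.le, inv_mul_cancel_right₀ (by positivity)]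
end

section
/- Let a : I → (0,∞) be smooth and define the Clairaut radius ρ(u) = a(u)·u^α for u > 0. The parallel u = u₀ (i.e., the curve v ↦ (u₀, v)) is an α-catenary of the metric du² + a(u)² dv² if and only if ρ'(u₀) = 0. -/
open Real

/-- The parallel `v ↦ (u₀, v)` of the surface of revolution with metric `du² + a(u)² dv²`
is an α-catenary iff the Clairaut radius `ρ(u) = a(u) u^α` has `ρ'(u₀) = 0`. -/
theorem stmt8 (α u₀ : ℝ) (hu₀ : 0 < u₀) (a : ℝ → ℝ)
    (ha : ContDiff ℝ (⊤ : ℕ∞) a) (hapos : ∀ x, 0 < a x) :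
    (∀ v : ℝ, ELat α (fun x _ => a x) (fun _ => u₀) (fun s => s) v) ↔
      deriv (fun x => a x * x ^ α) u₀ = 0 := by
  have hc : 0 < a u₀ := hapos u₀
  -- inner dx-derivative at 0 is 0
  have hB : ∀ s : ℝ, deriv (fun dx => Lag α (fun x _ => a x) u₀ s dx 1) 0 = 0 := by
    intro s
    have h1 : HasDerivAt (fun dx : ℝ => dx ^ 2 + a u₀ ^ 2) 0 0 := by
      simpa using (hasDerivAt_pow 2 (0:ℝ)).add_const (a u₀ ^ 2)
    have hne : (0:ℝ) ^ 2 + a u₀ ^ 2 ≠ 0 := by positivity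
    have h2 := (Real.hasDerivAt_sqrt hne).comp 0 h1
    have h3 : HasDerivAt (fun dx : ℝ => Lag α (fun x _ => a x) u₀ s dx 1) 0 0 := by
      have := h2.const_mul (u₀ ^ α)
      simpa [Lag, Function.comp] using this
    exact h3.deriv
  -- inner dy-derivative at 1 is constant
  have hD : ∀ s : ℝ, deriv (fun dy => Lag α (fun x _ => a x) u₀ s 0 dy) 1 = u₀ ^ α * a u₀ := by
    intro s
    have h1 : HasDerivAt (fun dy : ℝ => a u₀ ^ 2 * dy ^ 2) (2 * a u₀ ^ 2) 1 := by
      have := (hasDerivAt_pow 2 (1:ℝ)).const_mul (a u₀ ^ 2)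
      simpa [mul_comm] using this
    have hne : a u₀ ^ 2 * 1 ^ 2 ≠ 0 := by positivity
    have h2 := (Real.hasDerivAt_sqrt hne).comp 1 h1
    have hs : Real.sqrt (a u₀ ^ 2 * 1 ^ 2) = a u₀ := by
      simp [Real.sqrt_sq hc.le]
    have h3 : HasDerivAt (fun dy : ℝ => Lag α (fun x _ => a x) u₀ s 0 dy) (u₀ ^ α * a u₀) 1 := by
      have h4 := h2.const_mul (u₀ ^ α)
      have heq : u₀ ^ α * (1 / (2 * Real.sqrt (a u₀ ^ 2 * 1 ^ 2)) * (2 * a u₀ ^ 2))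
          = u₀ ^ α * a u₀ := by
        rw [hs]; field_simp
      rw [heq] at h4
      simpa [Lag, Function.comp] using h4
    exact h3.deriv
  -- the x-function equals a x * x ^ α
  have hA : ∀ v : ℝ, (fun x => Lag α (fun x _ => a x) x v 0 1) = fun x => a x * x ^ α := by
    intro v
    funext x
    simp [Lag, Real.sqrt_sq (hapos x).le, mul_comm]
  have key : ∀ v : ℝ, ELat α (fun x _ => a x) (fun _ => u₀) (fun s => s) v ↔
      deriv (fun x => a x * x ^ α) u₀ = 0 := by
    intro v
    unfold ELat
    simp only [deriv_const', deriv_id'']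
    rw [show (fun s : ℝ => deriv (fun dx => Lag α (fun x _ => a x) u₀ s dx 1) 0) = fun _ => 0
        from funext hB]
    rw [show (fun s : ℝ => deriv (fun dy => Lag α (fun x _ => a x) u₀ s 0 dy) 1)
        = fun _ => u₀ ^ α * a u₀ from funext hD]
    rw [hA v]
    have hCy : (fun y : ℝ => Lag α (fun x _ => a x) u₀ y 0 1)
        = fun _ => u₀ ^ α * a u₀ := by
      funext y
      simp [Lag, Real.sqrt_sq hc.le]
    rw [hCy]
    simp
  constructor
  · intro h; exact (key 0).mp (h 0)
  · intro h v; exact (key v).mpr h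
end

section
/- If u : I → (0,∞) satisfies the graph α-catenary equation α a (u̇² + a²) = u(a ü - 2a' u̇² - a² a') on a surface of revolution with profile radius a = a(u(v)), then there exists a constant c > 0 such that u̇² = a(u)²·(u^{2α} a(u)²/c² - 1) wherever defined. -/
open Real Set

/-- If `u : I → (0,∞)` satisfies the graph α-catenary equation
`α a (u̇² + a²) = u(a ü - 2 a' u̇² - a² a')` (with `a = a(u(v))`) on an open interval,
then there is `c > 0` with `u̇² = a(u)² (u^{2α} a(u)²/c² - 1)` there. -/
theorem stmt9 (α p q : ℝ) (a : ℝ → ℝ) (ha : ContDiff ℝ (⊤ : ℕ∞) a)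
    (hapos : ∀ x, 0 < x → 0 < a x) (u : ℝ → ℝ)
    (hu : ContDiffOn ℝ 2 u (Ioo p q))
    (hpos : ∀ v ∈ Ioo p q, 0 < u v)
    (heq : ∀ v ∈ Ioo p q,
      α * a (u v) * ((deriv u v) ^ 2 + (a (u v)) ^ 2) =
        u v * (a (u v) * deriv (deriv u) v - 2 * deriv a (u v) * (deriv u v) ^ 2 -
          (a (u v)) ^ 2 * deriv a (u v))) :
    ∃ c : ℝ, 0 < c ∧ ∀ v ∈ Ioo p q,
      (deriv u v) ^ 2 = (a (u v)) ^ 2 * (u v ^ (2 * α) * (a (u v)) ^ 2 / c ^ 2 - 1) := by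
  rcases le_or_gt q p with hpq | hpq
  · exact ⟨1, one_pos, fun v hv => absurd hv (by simp [Ioo_eq_empty (not_lt.2 hpq)])⟩
  set G : ℝ → ℝ := fun v => u v ^ (2*α) * (a (u v))^4 / ((deriv u v)^2 + (a (u v))^2)
    with hGdef
  have hD : ∀ v ∈ Ioo p q, 0 < (deriv u v)^2 + (a (u v))^2 := by
    intro v hv
    have := hapos _ (hpos v hv)
    positivity
  have key : ∀ v ∈ Ioo p q, HasDerivAt G 0 v := by
    intro v hv
    have hU : 0 < u v := hpos v hv
    have hA : 0 < a (u v) := hapos _ hU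
    have h1 : HasDerivAt u (deriv u v) v :=
      (((hu.differentiableOn (by norm_num)) v hv).differentiableAt
        (isOpen_Ioo.mem_nhds hv)).hasDerivAt
    have h2 : HasDerivAt (deriv u) (deriv (deriv u) v) v := by
      have := hu.deriv_of_isOpen (m := 1) isOpen_Ioo (by norm_num)
      exact (((this.differentiableOn (by norm_num)) v hv).differentiableAt
        (isOpen_Ioo.mem_nhds hv)).hasDerivAt
    have h3 : HasDerivAt (fun w => a (u w)) (deriv a (u v) * deriv u v) v :=
      ((ha.differentiable (by simp) (u v)).hasDerivAt).comp v h1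
    have h4 : HasDerivAt (fun w => u w ^ (2*α)) (2*α * u v ^ (2*α - 1) * deriv u v) v := by
      have := h1.rpow_const (p := 2*α) (Or.inl (ne_of_gt hU))
      convert this using 1
      ring
    have hN : HasDerivAt (fun w => u w ^ (2*α) * (a (u w))^4)
        ((2*α * u v ^ (2*α - 1) * deriv u v) * (a (u v))^4 +
          u v ^ (2*α) * (4 * (a (u v))^3 * (deriv a (u v) * deriv u v))) v :=
      h4.mul (by simpa using h3.fun_pow 4)
    have hDdv : HasDerivAt (fun w => (deriv u w)^2 + (a (u w))^2)
        (2 * deriv u v * deriv (deriv u) v + 2 * a (u v) * (deriv a (u v) * deriv u v)) v := by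
      have e1 : HasDerivAt (fun w => (deriv u w)^2) (2 * deriv u v * deriv (deriv u) v) v := by
        simpa [mul_comm, mul_assoc] using h2.fun_pow 2
      have e2 : HasDerivAt (fun w => (a (u w))^2) (2 * a (u v) * (deriv a (u v) * deriv u v)) v := by
        simpa [mul_comm, mul_assoc] using h3.fun_pow 2
      exact e1.add e2
    have hDne : (deriv u v)^2 + (a (u v))^2 ≠ 0 := ne_of_gt (hD v hv)
    have hG' := hN.fun_div hDdv hDne
    refine hG'.congr_deriv (Eq.symm ?_)
    have hrw : u v ^ (2*α - 1) = u v ^ (2*α) / u v := Real.rpow_sub_one (ne_of_gt hU) _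
    rw [hrw, eq_comm, div_eq_zero_iff]
    left
    have h := heq v hv
    have hUne : u v ≠ 0 := ne_of_gt hU
    field_simp
    linear_combination (2 * u v ^ (2*α) * (a (u v))^3 * deriv u v) * h
  have pair : ∀ x ∈ Ioo p q, ∀ y ∈ Ioo p q, x ≤ y → G y = G x := by
    intro x hx y hy hxy
    have hsub : Icc x y ⊆ Ioo p q := Icc_subset_Ioo hx.1 hy.2
    exact constant_of_has_deriv_right_zero
      (fun z hz => ((key z (hsub hz)).continuousAt).continuousWithinAt)
      (fun z hz => ((key z (hsub (Ico_subset_Icc_self hz))).hasDerivWithinAt))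
      y (right_mem_Icc.2 hxy)
  set v0 : ℝ := (p+q)/2 with hv0def
  have hv0 : v0 ∈ Ioo p q := ⟨by simp only [hv0def]; linarith, by simp only [hv0def]; linarith⟩
  have hconst : ∀ v ∈ Ioo p q, G v = G v0 := by
    intro v hv
    rcases le_total v v0 with h | h
    · exact (pair v hv v0 hv0 h).symm
    · exact pair v0 hv0 v hv h
  have hGpos : 0 < G v0 := by
    have h1 : 0 < u v0 := hpos v0 hv0
    have h2 : 0 < a (u v0) := hapos _ h1
    have h3 : 0 < u v0 ^ (2*α) := Real.rpow_pos_of_pos h1 _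
    have h4 := hD v0 hv0
    simp only [hGdef]
    positivity
  obtain ⟨c, hc0, hcsq⟩ : ∃ c : ℝ, 0 < c ∧ c ^ 2 = G v0 :=
    ⟨Real.sqrt (G v0), Real.sqrt_pos.2 hGpos, Real.sq_sqrt hGpos.le⟩
  refine ⟨c, hc0, ?_⟩
  intro v hv
  have hDne : (deriv u v)^2 + (a (u v))^2 ≠ 0 := ne_of_gt (hD v hv)
  have hGv : u v ^ (2*α) * (a (u v))^4 = c^2 * ((deriv u v)^2 + (a (u v))^2) := by
    have h := hconst v hv
    rw [← hcsq] at h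
    simp only [hGdef] at h
    exact (div_eq_iff hDne).1 h
  have hcne : c ≠ 0 := ne_of_gt hc0
  field_simp
  linear_combination -hGv
end

section
/- The function u(v) = μ / √(cos(√2 v + ν)), defined on an interval where cos(√2 v + ν) > 0 and μ > 0, satisfies the differential equation u ü = 3 u̇² + u². -/
/-!
Write `u = μ / √g`. For any positive `C²` function `g`, differentiating twice gives
`u ü - 3 u̇² = -(μ² / 2) g̈ / g²`; since `u² = μ² / g`, this makes `u ü = 3 u̇² + u²` exactly
when `g̈ = -2 g`.
The function `g(v) = cos(√2 v + ν)` solves this linear equation.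
-/

open Real Filter Topology

section DivSqrt

variable {g g' : ℝ → ℝ} {d d₂ x : ℝ} (μ : ℝ)

theorem hasDerivAt_div_sqrt (hg : HasDerivAt g d x) (hx : 0 < g x) :
    HasDerivAt (fun w => μ / √(g w)) (-(μ * d) / (2 * g x * √(g x))) x := by
  have hs : 0 < √(g x) := sqrt_pos.2 hx
  refine ((hasDerivAt_const x μ).div (hg.sqrt hx.ne') hs.ne').congr_deriv ?_
  field_simp
  rw [sq_sqrt hx.le]
  ring

theorem hasDerivAt_deriv_div_sqrt (hg : ∀ᶠ w in 𝓝 x, HasDerivAt g (g' w) w)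
    (hg' : HasDerivAt g' d₂ x) (hx : 0 < g x) :
    HasDerivAt (deriv fun w => μ / √(g w))
      (μ * (3 * g' x ^ 2 - 2 * g x * d₂) / (4 * g x ^ 2 * √(g x))) x := by
  have hgx := hg.self_of_nhds
  have hpos : ∀ᶠ w in 𝓝 x, 0 < g w :=
    continuousAt_const.eventually_lt hgx.continuousAt hx
  have hderiv : (deriv fun w => μ / √(g w)) =ᶠ[𝓝 x]
      fun w => -(μ * g' w) / (2 * g w * √(g w)) := by
    filter_upwards [hg, hpos] with w hgw hw using (hasDerivAt_div_sqrt μ hgw hw).deriv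
  refine HasDerivAt.congr_of_eventuallyEq ?_ hderiv
  have hs : 0 < √(g x) := sqrt_pos.2 hx
  refine ((hg'.const_mul μ).neg.div ((hgx.const_mul 2).mul (hgx.sqrt hx.ne'))
    (by simp only [Pi.mul_apply]; positivity)).congr_deriv ?_
  simp only [Pi.mul_apply, Pi.neg_apply]
  field_simp
  rw [sq_sqrt hx.le]
  ring

theorem div_sqrt_mul_deriv_deriv_eq (hg : ∀ᶠ w in 𝓝 x, HasDerivAt g (g' w) w)
    (hg' : HasDerivAt g' (-2 * g x) x) (hx : 0 < g x) :
    (fun w => μ / √(g w)) x * deriv (deriv fun w => μ / √(g w)) x =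
      3 * deriv (fun w => μ / √(g w)) x ^ 2 + (fun w => μ / √(g w)) x ^ 2 := by
  rw [(hasDerivAt_deriv_div_sqrt μ hg hg' hx).deriv,
    (hasDerivAt_div_sqrt μ hg.self_of_nhds hx).deriv]
  field_simp
  ring

end DivSqrt

theorem stmt13_general (μ ν : ℝ) :
    ∀ v : ℝ, 0 < Real.cos (Real.sqrt 2 * v + ν) →
      (fun w => μ / Real.sqrt (Real.cos (Real.sqrt 2 * w + ν))) v *
          deriv (deriv (fun w => μ / Real.sqrt (Real.cos (Real.sqrt 2 * w + ν)))) v =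
        3 * (deriv (fun w => μ / Real.sqrt (Real.cos (Real.sqrt 2 * w + ν))) v) ^ 2 +
          ((fun w => μ / Real.sqrt (Real.cos (Real.sqrt 2 * w + ν))) v) ^ 2 := by
  intro v hv
  have hphase (w : ℝ) : HasDerivAt (fun w => √2 * w + ν) √2 w := by
    simpa using ((hasDerivAt_id w).const_mul √2).add_const ν
  have hcos (w : ℝ) :
      HasDerivAt (fun w => cos (√2 * w + ν)) (-√2 * sin (√2 * w + ν)) w := by
    simpa [mul_comm] using (hphase w).cos
  have hsin : HasDerivAt (fun w => -√2 * sin (√2 * w + ν)) (-2 * cos (√2 * v + ν)) v := by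
    refine ((hphase v).sin.const_mul (-√2)).congr_deriv ?_
    linear_combination (-cos (√2 * v + ν)) * mul_self_sqrt zero_le_two
  exact div_sqrt_mul_deriv_deriv_eq μ (Eventually.of_forall hcos) hsin hv

/-- The function `u(v) = μ/√(cos(√2 v + ν))` with `μ > 0` satisfies the cone catenary
equation `u ü = 3 u̇² + u²` at every point where `cos(√2 v + ν) > 0`. -/
theorem stmt13 (μ ν : ℝ) (hμ : 0 < μ) :
    ∀ v : ℝ, 0 < Real.cos (Real.sqrt 2 * v + ν) →
      (fun w => μ / Real.sqrt (Real.cos (Real.sqrt 2 * w + ν))) v *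
          deriv (deriv (fun w => μ / Real.sqrt (Real.cos (Real.sqrt 2 * w + ν)))) v =
        3 * (deriv (fun w => μ / Real.sqrt (Real.cos (Real.sqrt 2 * w + ν))) v) ^ 2 +
          ((fun w => μ / Real.sqrt (Real.cos (Real.sqrt 2 * w + ν))) v) ^ 2 :=
  stmt13_general μ ν
end

section
/- Let a : (0,∞) → (0,∞) be smooth and let w = w(u) satisfy the ODE (w²/2)' = 2(α/u + 2a'/a)(w²/2) + a²(α/u + a'/a) on an interval I ⊂ (0,∞). Then there is a constant c₁ such that w² = a(u)²(c₁ u^{2α} a(u)² - 1) on I; conversely every such function solves the ODE. -/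
open Real Set

private lemma alg_fwd (α x X A A' W W' : ℝ) (hx : x ≠ 0) (hA : A ≠ 0)
    (E : W * W' = 2 * (α / x + 2 * A' / A) * (W ^ 2 / 2) + A ^ 2 * (α / x + A' / A)) :
    (2 * W * W' + 2 * A * A') * (X * A ^ 4)
      - (W ^ 2 + A ^ 2) * ((2 * α) * (X / x) * A ^ 4 + X * (4 * A ^ 3 * A')) = 0 := by
  have E' : W * W' * (x * A) = α * A * W ^ 2 + 2 * A' * x * W ^ 2 + α * A ^ 3 + A ^ 2 * A' * x := by
    have h2 : (2 * x * A) ≠ 0 := by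
      simp [hx, hA]
    refine mul_left_cancel₀ h2 ?_
    field_simp at E
    linear_combination (2 * x * A) * E
  field_simp
  linear_combination (2 * X * A ^ 3) * E' 

/-- If `w` satisfies the linear ODE `(w²/2)' = 2(α/u + 2a'/a)(w²/2) + a²(α/u + a'/a)` on an
open interval `I ⊆ (0,∞)`, then `w² = a(u)²(c₁ u^{2α} a(u)² - 1)` on `I` for some constant
`c₁`; conversely, every function satisfying such an identity solves the ODE. -/
theorem stmt18 (α p q : ℝ) (hpq : p < q) (hp : 0 < p)
    (a : ℝ → ℝ) (ha : ContDiff ℝ (⊤ : ℕ∞) a) (hapos : ∀ x, 0 < x → 0 < a x)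
    (w : ℝ → ℝ) (hw : DifferentiableOn ℝ w (Ioo p q)) :
    ((∀ x ∈ Ioo p q,
        deriv (fun t => w t ^ 2 / 2) x =
          2 * (α / x + 2 * deriv a x / a x) * (w x ^ 2 / 2) +
            (a x) ^ 2 * (α / x + deriv a x / a x)) →
      ∃ c₁ : ℝ, ∀ x ∈ Ioo p q,
        w x ^ 2 = (a x) ^ 2 * (c₁ * x ^ (2 * α) * (a x) ^ 2 - 1)) ∧
    (∀ c₁ : ℝ,
      (∀ x ∈ Ioo p q, w x ^ 2 = (a x) ^ 2 * (c₁ * x ^ (2 * α) * (a x) ^ 2 - 1)) →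
      ∀ x ∈ Ioo p q,
        deriv (fun t => w t ^ 2 / 2) x =
          2 * (α / x + 2 * deriv a x / a x) * (w x ^ 2 / 2) +
            (a x) ^ 2 * (α / x + deriv a x / a x)) := by
  have haD : Differentiable ℝ a := ha.differentiable (by simp)
  have hI : IsOpen (Ioo p q) := isOpen_Ioo
  have hx0 : ∀ x ∈ Ioo p q, (0:ℝ) < x := fun x hx => hp.trans hx.1
  have hax : ∀ x ∈ Ioo p q, 0 < a x := fun x hx => hapos x (hx0 x hx)
  -- derivative of t ↦ t^(2α) * a t ^ 4
  have hh : ∀ x ∈ Ioo p q,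
      HasDerivAt (fun t : ℝ => t ^ (2*α) * a t ^ 4)
        ((2*α) * x ^ (2*α - 1) * a x ^ 4 + x ^ (2*α) * (4 * a x ^ 3 * deriv a x)) x := by
    intro x hx
    have hr : HasDerivAt (fun t : ℝ => t ^ (2*α)) ((2*α) * x ^ (2*α - 1)) x :=
      Real.hasDerivAt_rpow_const (Or.inl (hx0 x hx).ne')
    have hA4 : HasDerivAt (fun t => a t ^ 4) (4 * a x ^ 3 * deriv a x) x := by
      simpa using (haD x).hasDerivAt.fun_pow 4
    simpa [mul_comm, mul_left_comm] using hr.fun_mul hA4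
  have hhne : ∀ x ∈ Ioo p q, x ^ (2*α) * a x ^ 4 ≠ 0 := by
    intro x hx
    have h1 := Real.rpow_pos_of_pos (hx0 x hx) (2*α)
    have h2 := hax x hx
    positivity
  constructor
  · -- forward direction
    intro hode
    set g : ℝ → ℝ := fun t => (w t ^ 2 + a t ^ 2) / (t ^ (2*α) * a t ^ 4) with hg_def
    have hg0 : ∀ x ∈ Ioo p q, HasDerivAt g 0 x := by
      intro x hx
      have hW : HasDerivAt w (deriv w x) x :=
        (hw.differentiableAt (hI.mem_nhds hx)).hasDerivAt
      have hW2 : HasDerivAt (fun t => w t ^ 2) (2 * w x * deriv w x) x := by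
        simpa using hW.fun_pow 2
      have hF : HasDerivAt (fun t => w t ^ 2 + a t ^ 2)
          (2 * w x * deriv w x + 2 * a x * deriv a x) x := by
        have hA2 : HasDerivAt (fun t => a t ^ 2) (2 * a x * deriv a x) x := by
          simpa using (haD x).hasDerivAt.fun_pow 2
        exact hW2.add hA2
      have hder : deriv (fun t => w t ^ 2 / 2) x = w x * deriv w x := by
        rw [(hW2.div_const 2).deriv]; ring
      have E : w x * deriv w x =
          2 * (α / x + 2 * deriv a x / a x) * (w x ^ 2 / 2) +
            (a x) ^ 2 * (α / x + deriv a x / a x) := by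
        rw [← hder]; exact hode x hx
      have hnum := alg_fwd α x (x ^ (2*α)) (a x) (deriv a x) (w x) (deriv w x)
        (hx0 x hx).ne' (hax x hx).ne' E
      have hdiv := hF.div (hh x hx) (hhne x hx)
      have : ((2 * w x * deriv w x + 2 * a x * deriv a x) * (x ^ (2*α) * a x ^ 4)
          - (w x ^ 2 + a x ^ 2) *
            ((2*α) * x ^ (2*α - 1) * a x ^ 4 + x ^ (2*α) * (4 * a x ^ 3 * deriv a x)))
          / (x ^ (2*α) * a x ^ 4) ^ 2 = 0 := by
        rw [div_eq_zero_iff]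
        left
        rw [Real.rpow_sub (hx0 x hx), Real.rpow_one]
        calc _ = (2 * w x * deriv w x + 2 * a x * deriv a x) * (x ^ (2*α) * a x ^ 4)
            - (w x ^ 2 + a x ^ 2) *
              ((2 * α) * (x ^ (2*α) / x) * a x ^ 4 + x ^ (2*α) * (4 * a x ^ 3 * deriv a x)) := by
              ring
          _ = 0 := hnum
      exact this ▸ hdiv
    have hgdiff : DifferentiableOn ℝ g (Ioo p q) := fun x hx =>
      ((hg0 x hx).differentiableAt).differentiableWithinAt
    have hgfd : ∀ x ∈ Ioo p q, fderivWithin ℝ g (Ioo p q) x = 0 := by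
      intro x hx
      rw [((hg0 x hx).hasFDerivAt.hasFDerivWithinAt).fderivWithin (hI.uniqueDiffWithinAt hx)]
      exact ContinuousLinearMap.ext fun y => by simp
    have hx₀ : (p + q) / 2 ∈ Ioo p q := ⟨by linarith, by linarith⟩
    refine ⟨g ((p + q) / 2), fun x hx => ?_⟩
    have hc : g x = g ((p + q) / 2) :=
      (convex_Ioo p q).is_const_of_fderivWithin_eq_zero hgdiff hgfd hx hx₀
    have hx' : (w x ^ 2 + a x ^ 2) / (x ^ (2*α) * a x ^ 4) = g ((p+q)/2) := hc
    rw [div_eq_iff (hhne x hx)] at hx'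
    linear_combination hx' 
  · -- converse
    intro c₁ hid x hx
    have hA : HasDerivAt a (deriv a x) x := (haD x).hasDerivAt
    have hφ : HasDerivAt (fun t => (c₁ * (t ^ (2*α) * a t ^ 4) - a t ^ 2) / 2)
        ((c₁ * ((2*α) * x ^ (2*α - 1) * a x ^ 4 + x ^ (2*α) * (4 * a x ^ 3 * deriv a x))
          - 2 * a x * deriv a x) / 2) x := by
      have hA2 : HasDerivAt (fun t => a t ^ 2) (2 * a x * deriv a x) x := by
        simpa using hA.fun_pow 2
      exact (((hh x hx).const_mul c₁).sub hA2).div_const 2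
    have heq : (fun t => w t ^ 2 / 2)
        =ᶠ[nhds x] (fun t => (c₁ * (t ^ (2*α) * a t ^ 4) - a t ^ 2) / 2) := by
      filter_upwards [hI.mem_nhds hx] with t ht
      rw [hid t ht]; ring
    rw [heq.deriv_eq, hφ.deriv]
    rw [Real.rpow_sub (hx0 x hx), Real.rpow_one, hid x hx]
    have h1 : x ≠ 0 := (hx0 x hx).ne'
    have h2 : a x ≠ 0 := (hax x hx).ne'
    field_simp
    ring
end
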